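/- Let ℜ ⊆ F(𝒜), let r ∈ F(𝒜) and let Γ ∈ co(ℜ). Then ι(r) ∉ Q_Γ(ℜ) if and only if r ∉ K·ℜ_0(Γ) and |Γ ∩ supp(r)| ≤ 1. -/

import Mathlib

open MvPolynomial

noncomputable section

variable {K : Type*} [Field K] {n : ℕ}

open Classical in
/-- The support `supp(a) = {i : aᵢ ≠ 0}` of the linear form `∑ᵢ aᵢ xᵢ ∈ S₁`,
where linear forms of `S = K[x₁,…,xₙ]` are identified with their coefficient
vectors `a : Fin n → K`. -/
def lsupp (a : Fin n → K) : Finset (Fin n) :=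
  Finset.univ.filter (fun i => a i ≠ 0)

/-- `ι(r) = ∑_{i ∈ supp r} aᵢ · x_{supp(r) ∖ {i}}` for the linear form `r = ∑ᵢ aᵢ xᵢ`. -/
def iotaL (a : Fin n → K) : MvPolynomial (Fin n) K :=
  ∑ i ∈ lsupp a, C (a i) * ∏ j ∈ (lsupp a).erase i, X j

/-- `x_[n] = x₁⋯xₙ`. -/
def xAll (n : ℕ) (K : Type*) [Field K] : MvPolynomial (Fin n) K := ∏ i, X i

/-- `a : Fin n → K` (identified with the linear form `∑ᵢ aᵢ xᵢ ∈ S₁`) is a relation of the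
central arrangement whose hyperplanes are the kernels of the linear forms `α i`, i.e. it lies
in the kernel of the map `S₁ → V*`, `xᵢ ↦ αᵢ`. -/
def IsRel {V : Type*} [AddCommGroup V] [Module K V]
    (α : Fin n → Module.Dual K V) (a : Fin n → K) : Prop :=
  ∑ i, a i • α i = 0

/-- `J(ℜ) = (ι(r) : r ∈ ℜ)`. -/
def Jid (R : Set (Fin n → K)) : Ideal (MvPolynomial (Fin n) K) :=
  Ideal.span (iotaL '' R)

/-- `I(ℜ) = (ι(r) : r ∈ K·ℜ)`. -/
def Iid (R : Set (Fin n → K)) : Ideal (MvPolynomial (Fin n) K) :=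
  Ideal.span (iotaL '' (Submodule.span K R : Set (Fin n → K)))

/-- The Orlik–Terao ideal `I(𝒜) = (ι(r) : r ∈ F(𝒜))`. -/
def OTid {V : Type*} [AddCommGroup V] [Module K V]
    (α : Fin n → Module.Dual K V) : Ideal (MvPolynomial (Fin n) K) :=
  Ideal.span (iotaL '' {a | IsRel α a})

/-- The codimension (height) of an ideal `I`: the infimum of the heights, in the prime
spectrum, of the prime ideals containing `I`. -/
def codim {R : Type*} [CommRing R] (I : Ideal R) : ℕ∞ :=
  ⨅ p ∈ {p : PrimeSpectrum R | I ≤ p.asIdeal}, Order.height p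

/-- `Γ ∈ co(ℜ)`: `Γ` is an `ℜ`-cover, i.e. `|Γ ∩ supp(r)| ≠ 1` for every `r ∈ ℜ`. -/
def IsCover (R : Set (Fin n → K)) (Γ : Finset (Fin n)) : Prop :=
  ∀ r ∈ R, (Γ ∩ lsupp r).card ≠ 1

/-- `ℜ₀(Γ) = {r ∈ ℜ : Γ ∩ supp(r) = ∅}`. -/
def R0 (R : Set (Fin n → K)) (Γ : Finset (Fin n)) : Set (Fin n → K) :=
  {r ∈ R | Γ ∩ lsupp r = ∅}

/-- `Q_Γ(ℜ) = (xᵢ : i ∈ Γ) + I(ℜ₀(Γ))`. -/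
def Qid (R : Set (Fin n → K)) (Γ : Finset (Fin n)) : Ideal (MvPolynomial (Fin n) K) :=
  Ideal.span ((fun i => (X i : MvPolynomial (Fin n) K)) '' ↑Γ) ⊔ Iid (R0 R Γ)

/-!
If `r ∈ K·ℜ₀(Γ)` then `ι(r) ∈ I(ℜ₀(Γ))`, and if `|Γ ∩ supp r| ≥ 2` every term of `ι(r)` is
divisible by some `xᵢ` with `i ∈ Γ`. Conversely, no standard basis vector `eⱼ` is a relation, so
`r, e₁, …, eₙ` all avoid `W = K·ℜ₀(Γ)`, and combining separating functionals `φ₀, …, φₙ` as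
`∑ⱼ tʲ φⱼ` gives a linear map `g : Kⁿ → K(t)` vanishing on `W` and at none of them. With
`zᵢ = g(eᵢ)` one has `ι(s)(z⁻¹) = (∏_{i ∈ supp s} zᵢ⁻¹) · g(s)`, so the point that is `0` on `Γ`
and `zᵢ⁻¹` off `Γ` kills `Q_Γ(ℜ)` but not `ι(r)`.
-/

theorem mem_lsupp {a : Fin n → K} {i : Fin n} : i ∈ lsupp a ↔ a i ≠ 0 := by
  simp [lsupp]

theorem LinearMap.eq_linearCombination_single {ι M : Type*} [Fintype ι] [DecidableEq ι]
    [AddCommGroup M] [Module K M] (g : (ι → K) →ₗ[K] M) :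
    g = Fintype.linearCombination K (fun i => g (Pi.single i 1)) := by
  ext i
  simp

theorem Submodule.exists_ratFunc_linearMap_le_ker_of_forall_notMem {M ι : Type*}
    [AddCommGroup M] [Module K M] [Fintype ι] {W : Submodule K M} {v : ι → M}
    (hv : ∀ i, v i ∉ W) :
    ∃ g : M →ₗ[K] RatFunc K, W ≤ LinearMap.ker g ∧ ∀ i, g (v i) ≠ 0 := by
  choose φ hφv hφW using fun i => W.exists_dual_map_eq_bot_of_notMem (hv i) inferInstance
  have hφ : ∀ i, ∀ w ∈ W, φ i w = 0 := fun i w hw =>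
    LinearMap.le_ker_iff_map.2 (hφW i) hw
  let e := Fintype.equivFin ι
  let g : M →ₗ[K] Polynomial K := ∑ i, Polynomial.monomial (e i : ℕ) ∘ₗ φ i
  refine ⟨(Algebra.linearMap (Polynomial K) (RatFunc K)).restrictScalars K ∘ₗ g,
    fun w hw => ?_, fun j => ?_⟩
  · simp [g, hφ _ w hw]
  · have hcoeff : (g (v j)).coeff (e j) = φ j (v j) := by
      simp only [g, LinearMap.sum_apply, LinearMap.comp_apply,
        Polynomial.finsetSum_coeff, Polynomial.coeff_monomial]
      rw [Finset.sum_eq_single j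
        (fun i _ hij => if_neg (Fin.val_injective.ne (e.injective.ne hij))) (by simp), if_pos rfl]
    have hg : g (v j) ≠ 0 := fun h => hφv j (by rw [← hcoeff, h, Polynomial.coeff_zero])
    simpa using hg

theorem isRel_iff_linearCombination_eq_zero {V : Type*} [AddCommGroup V] [Module K V]
    (α : Fin n → Module.Dual K V) (a : Fin n → K) :
    IsRel α a ↔ Fintype.linearCombination K α a = 0 := by
  rw [IsRel, Fintype.linearCombination_apply]

theorem single_notMem_span_of_isRel {V : Type*} [AddCommGroup V] [Module K V]
    {α : Fin n → Module.Dual K V} (hne : ∀ i, α i ≠ 0) {S : Set (Fin n → K)}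
    (hS : ∀ s ∈ S, IsRel α s) (j : Fin n) : Pi.single j 1 ∉ Submodule.span K S := by
  have hker : Submodule.span K S ≤ LinearMap.ker (Fintype.linearCombination K α) :=
    Submodule.span_le.2 fun s hs => (isRel_iff_linearCombination_eq_zero α s).1 (hS s hs)
  intro hj
  simpa using hne j (by simpa using hker hj)

section Evaluation

variable {L : Type*} [Field L] [Algebra K L]

theorem aeval_iotaL (y : Fin n → L) (a : Fin n → K) :
    aeval y (iotaL a) = ∑ i ∈ lsupp a, algebraMap K L (a i) * ∏ j ∈ (lsupp a).erase i, y j := by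
  simp [iotaL, map_sum, map_prod]

theorem aeval_iotaL_congr {y y' : Fin n → L} {a : Fin n → K} (h : ∀ i ∈ lsupp a, y i = y' i) :
    aeval y (iotaL a) = aeval y' (iotaL a) := by
  simp only [aeval_iotaL]
  refine Finset.sum_congr rfl fun i _ => ?_
  rw [Finset.prod_congr rfl fun j hj => h j (Finset.mem_of_mem_erase hj)]

theorem aeval_inv_iotaL {z : Fin n → L} {a : Fin n → K} (hz : ∀ i ∈ lsupp a, z i ≠ 0) :
    aeval (fun i => (z i)⁻¹) (iotaL a) =
      (∏ i ∈ lsupp a, (z i)⁻¹) * Fintype.linearCombination K z a := by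
  have hsupp : Fintype.linearCombination K z a = ∑ i ∈ lsupp a, a i • z i := by
    rw [Fintype.linearCombination_apply]
    exact (Finset.sum_subset (Finset.subset_univ _) fun i _ hi => by
      rw [mem_lsupp, not_not] at hi; simp [hi]).symm
  rw [aeval_iotaL, hsupp, Finset.mul_sum]
  refine Finset.sum_congr rfl fun i hi => ?_
  rw [← Finset.mul_prod_erase _ _ hi, Algebra.smul_def]
  field_simp [hz i hi]

theorem aeval_iotaL_of_eq_zero {y : Fin n → L} {a : Fin n → K} {k : Fin n}
    (hk : k ∈ lsupp a) (hy : y k = 0) :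
    aeval y (iotaL a) = algebraMap K L (a k) * ∏ j ∈ (lsupp a).erase k, y j := by
  rw [aeval_iotaL, Finset.sum_eq_single_of_mem k hk]
  intro i _ hik
  rw [Finset.prod_eq_zero (Finset.mem_erase.2 ⟨Ne.symm hik, hk⟩) hy, mul_zero]

theorem apply_eq_zero_of_mem_span_R0 {R : Set (Fin n → K)} {Γ : Finset (Fin n)}
    {s : Fin n → K} (hs : s ∈ Submodule.span K (R0 R Γ)) {i : Fin n} (hi : i ∈ Γ) :
    s i = 0 := by
  induction hs using Submodule.span_induction with
  | mem x hx =>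
    by_contra hxi
    simpa [hx.2] using Finset.mem_inter.2 ⟨hi, mem_lsupp.2 hxi⟩
  | zero => rfl
  | add x y _ _ hx hy => simp [hx, hy]
  | smul c x _ hx => simp [hx]

theorem Qid_le_ker_aeval_piecewise {R : Set (Fin n → K)} {Γ : Finset (Fin n)} {z : Fin n → L}
    (hz : ∀ i, z i ≠ 0)
    (hW : Submodule.span K (R0 R Γ) ≤ LinearMap.ker (Fintype.linearCombination K z)) :
    Qid R Γ ≤ RingHom.ker (aeval (Γ.piecewise 0 fun i => (z i)⁻¹)) := by
  refine sup_le (Ideal.span_le.2 ?_) (Ideal.span_le.2 ?_)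
  · rintro _ ⟨i, hi, rfl⟩
    simp [Finset.mem_coe.1 hi]
  · rintro _ ⟨s, hs, rfl⟩
    have hoff : ∀ i ∈ lsupp s, Γ.piecewise 0 (fun i => (z i)⁻¹) i = (z i)⁻¹ := fun i hi =>
      Finset.piecewise_eq_of_notMem _ _ _ fun hiΓ =>
        mem_lsupp.1 hi (apply_eq_zero_of_mem_span_R0 hs hiΓ)
    simp [aeval_iotaL_congr hoff, aeval_inv_iotaL fun i _ => hz i, LinearMap.mem_ker.1 (hW hs)]

end Evaluation

theorem iotaL_mem_span_X_of_one_lt_card {Γ : Finset (Fin n)} {a : Fin n → K}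
    (h : 1 < (Γ ∩ lsupp a).card) :
    iotaL a ∈ Ideal.span ((fun i => (X i : MvPolynomial (Fin n) K)) '' ↑Γ) := by
  refine Ideal.sum_mem _ fun i _ => ?_
  obtain ⟨k, hk⟩ : ((Γ ∩ lsupp a).erase i).Nonempty := by
    rw [← Finset.card_pos]
    have := Finset.pred_card_le_card_erase (s := Γ ∩ lsupp a) (a := i)
    omega
  obtain ⟨hki, hkΓ, hka⟩ : k ≠ i ∧ k ∈ Γ ∧ k ∈ lsupp a := by simpa using hk
  rw [← Finset.mul_prod_erase _ _ (Finset.mem_erase.2 ⟨hki, hka⟩)]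
  exact Ideal.mul_mem_left _ _ (Ideal.mul_mem_right _ _ (Ideal.subset_span ⟨k, hkΓ, rfl⟩))

theorem iotaL_notMem_Qid_of_card_le_one {R : Set (Fin n → K)} {Γ : Finset (Fin n)}
    {r : Fin n → K} (hsingle : ∀ j, Pi.single j 1 ∉ Submodule.span K (R0 R Γ))
    (hr : r ∉ Submodule.span K (R0 R Γ)) (hcard : (Γ ∩ lsupp r).card ≤ 1) :
    iotaL r ∉ Qid R Γ := by
  obtain ⟨g, hW, hg⟩ :=
    Submodule.exists_ratFunc_linearMap_le_ker_of_forall_notMem (ι := Option (Fin n))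
      (v := fun o => o.elim r fun j => Pi.single j 1) (by rintro (_ | j); exacts [hr, hsingle j])
  set z : Fin n → RatFunc K := fun i => g (Pi.single i 1)
  have hz : ∀ i, z i ≠ 0 := fun i => hg (some i)
  have hgz : g = Fintype.linearCombination K z := LinearMap.eq_linearCombination_single g
  intro hmem
  have h0 := Qid_le_ker_aeval_piecewise hz (hgz ▸ hW) hmem
  rw [RingHom.mem_ker] at h0
  rcases Nat.le_one_iff_eq_zero_or_eq_one.1 hcard with hc | hc
  · have hoff : ∀ i ∈ lsupp r, Γ.piecewise 0 (fun i => (z i)⁻¹) i = (z i)⁻¹ := fun i hi =>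
      Finset.piecewise_eq_of_notMem _ _ _ fun hiΓ => by
        simpa [Finset.card_eq_zero.1 hc] using Finset.mem_inter.2 ⟨hiΓ, hi⟩
    rw [aeval_iotaL_congr hoff, aeval_inv_iotaL fun i _ => hz i, ← hgz] at h0
    exact mul_ne_zero (Finset.prod_ne_zero_iff.2 fun i _ => inv_ne_zero (hz i)) (hg none) h0
  · obtain ⟨k, hk⟩ := Finset.card_eq_one.1 hc
    obtain ⟨hkΓ, hkr⟩ := Finset.mem_inter.1 (hk ▸ Finset.mem_singleton_self k)
    rw [aeval_iotaL_of_eq_zero hkr (Finset.piecewise_eq_of_mem _ _ _ hkΓ)] at h0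
    refine mul_ne_zero ?_ (Finset.prod_ne_zero_iff.2 fun j hj => ?_) h0
    · simpa using mem_lsupp.1 hkr
    · obtain ⟨hjk, hjr⟩ := Finset.mem_erase.1 hj
      have hjΓ : j ∉ Γ := fun hjΓ =>
        hjk (Finset.mem_singleton.1 (hk ▸ Finset.mem_inter.2 ⟨hjΓ, hjr⟩))
      simpa [Finset.piecewise_eq_of_notMem _ _ _ hjΓ] using hz j

theorem iotaL_not_mem_Qid_iff_general
    {V : Type*} [AddCommGroup V] [Module K V]
    (α : Fin n → Module.Dual K V) (hne : ∀ i, α i ≠ 0)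
    (R : Set (Fin n → K)) (hR : ∀ r ∈ R, IsRel α r)
    (r : Fin n → K)
    (Γ : Finset (Fin n)) :
    iotaL r ∉ Qid R Γ ↔
      (r ∉ Submodule.span K (R0 R Γ) ∧ (Γ ∩ lsupp r).card ≤ 1) := by
  refine ⟨fun h => ⟨fun hr => h ?_, not_lt.1 fun hc => h ?_⟩, fun ⟨hr, hc⟩ => ?_⟩
  · exact Submodule.mem_sup_right (Ideal.subset_span ⟨r, hr, rfl⟩)
  · exact Submodule.mem_sup_left (iotaL_mem_span_X_of_one_lt_card hc)
  · exact iotaL_notMem_Qid_of_card_le_one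
      (single_notMem_span_of_isRel hne fun s hs => hR s hs.1) hr hc

/-- Lemma 4.3: let `ℜ ⊆ F(𝒜)`, `r ∈ F(𝒜)` and `Γ ∈ co(ℜ)`.  Then `ι(r) ∉ Q_Γ(ℜ)` if and
only if `r ∉ K·ℜ₀(Γ)` and `|Γ ∩ supp(r)| ≤ 1`. -/
theorem iotaL_not_mem_Qid_iff
    {V : Type*} [AddCommGroup V] [Module K V] [FiniteDimensional K V]
    (α : Fin n → Module.Dual K V) (hne : ∀ i, α i ≠ 0)
    (hdist : ∀ i j, i ≠ j → LinearMap.ker (α i) ≠ LinearMap.ker (α j))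
    (R : Set (Fin n → K)) (hR : ∀ r ∈ R, IsRel α r)
    (r : Fin n → K) (hr : IsRel α r)
    (Γ : Finset (Fin n)) (hΓ : IsCover R Γ) :
    iotaL r ∉ Qid R Γ ↔
      (r ∉ Submodule.span K (R0 R Γ) ∧ (Γ ∩ lsupp r).card ≤ 1) :=
  iotaL_not_mem_Qid_iff_general α hne R hR r Γ

end
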